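/- arXiv:1301.5667 — 2 statements merged into one kernel-verified Lean document; each statement's English description precedes it below -/
import Mathlib

section
/- Let i be an integer with (p-1)/2 ≤ i ≤ p-2, and set C(i) = {(x,y) ∈ N × N : x ∈ g_i \ g_{i+1} and [x,y] = 0}. Then C(i) = (g_i \ g_{i+1}) × g_{p-1-i}; that is, for x ∈ g_i \ g_{i+1} and y ∈ N, one has [x,y] = 0 if and only if y ∈ g_{p-1-i}, and every element of g_{p-1-i} lies in N. -/
open Polynomial

set_option synthInstance.maxHeartbeats 1000000
set_option maxHeartbeats 1000000

/-- The truncated polynomial algebra `A = k[X]/(X^p)`. -/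
noncomputable abbrev WittA (k : Type*) [Field k] (p : ℕ) : Type _ :=
  k[X] ⧸ Ideal.span ({X ^ p} : Set k[X])

/-- The coset of `X` in `A = k[X]/(X^p)`. -/
noncomputable abbrev WittX (k : Type*) [Field k] (p : ℕ) : WittA k p :=
  Ideal.Quotient.mk (Ideal.span ({X ^ p} : Set k[X])) X

/-! A derivation `D` of `A = k[X]/(X^p)` is determined by `D X = F(X)`, and the bracket of the
derivations with `x X = F(X)`, `y X = G(X)` sends `X` to the Wronskian `F G' - F' G` modulo `X^p`.
If `X^(i+1)` exactly divides `F` and `X^m` divides `G`, the coefficient of `X^(i+m)` in the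
Wronskian is `(m - i - 1) F_{i+1} G_m`; for `m ≤ i` this is nonzero unless `G_m = 0`, so the
vanishing of the Wronskian modulo `X^p` pushes the order of `G` up to `p - i`, while conversely the
orders of `F` and `G` add up to at least `p`. Nilpotency holds because a derivation with
`D X ∈ (X^2)` raises the `X`-adic filtration, so `D^p` lands in `(X^p) = 0`. -/

namespace Polynomial

variable {R : Type*} [CommRing R]

theorem X_pow_add_dvd_wronskian {a b : ℕ} {F G : R[X]} (hF : X ^ (a + 1) ∣ F)
    (hG : X ^ (b + 1) ∣ G) : X ^ (a + b + 1) ∣ wronskian F G := by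
  obtain ⟨u, rfl⟩ := hF
  obtain ⟨v, rfl⟩ := hG
  refine ⟨C ((b : R) + 1) * u * v + X * u * derivative v
      - (C ((a : R) + 1) * u * v + X * derivative u * v), ?_⟩
  simp only [wronskian, derivative_mul, derivative_X_pow, Nat.cast_add, Nat.cast_one,
    Nat.add_sub_cancel, C_add, C_1]
  ring

theorem wronskian_X_pow_mul (a b : ℕ) (u v : R[X]) :
    wronskian (X ^ (a + 1) * u) (X ^ b * v) =
      X ^ (a + b) * (C ((b : R) - (a + 1)) * (u * v) + X * wronskian u v) := by
  rcases b with _ | b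
  · simp only [wronskian, derivative_mul, derivative_X_pow, derivative_one, Nat.add_sub_cancel,
      pow_zero, Nat.cast_zero, Nat.cast_add, Nat.cast_one, C_sub, C_add, C_0, C_1, add_zero]
    ring
  · simp only [wronskian, derivative_mul, derivative_X_pow, Nat.add_sub_cancel, Nat.cast_add,
      Nat.cast_one, C_sub, C_add, C_1]
    ring

theorem X_pow_succ_dvd_of_dvd_wronskian [IsDomain R] {a b : ℕ} {F G : R[X]}
    (hF : X ^ (a + 1) ∣ F) (hF' : ¬ X ^ (a + 2) ∣ F) (hG : X ^ b ∣ G)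
    (hab : (b : R) ≠ a + 1) (hW : X ^ (a + b + 1) ∣ wronskian F G) : X ^ (b + 1) ∣ G := by
  obtain ⟨u, rfl⟩ := hF
  obtain ⟨v, rfl⟩ := hG
  have hu : u.coeff 0 ≠ 0 := by
    rw [Ne, ← X_dvd_iff]
    rintro ⟨w, rfl⟩
    exact hF' ⟨w, by ring⟩
  rw [wronskian_X_pow_mul, pow_succ,
    mul_dvd_mul_iff_left (pow_ne_zero _ X_ne_zero), X_dvd_iff] at hW
  simp only [coeff_add, mul_coeff_zero, coeff_C_zero, coeff_X_zero, zero_mul, add_zero,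
    mul_eq_zero, sub_eq_zero, hab, hu, false_or] at hW
  obtain ⟨w, rfl⟩ := X_dvd_iff.mpr hW
  exact ⟨w, by ring⟩

theorem X_pow_dvd_of_dvd_wronskian {p : ℕ} [CharP R p] [IsDomain R] {i : ℕ}
    (hi1 : p ≤ 2 * i + 1) (hi2 : i + 2 ≤ p) {F G : R[X]}
    (hF : X ^ (i + 1) ∣ F) (hF' : ¬ X ^ (i + 2) ∣ F) (hW : X ^ p ∣ wronskian F G) :
    X ^ (p - i) ∣ G := by
  suffices ∀ m ≤ p - i, X ^ m ∣ G from this _ le_rfl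
  intro m hm
  induction m with
  | zero => exact one_dvd G
  | succ m ih =>
    refine X_pow_succ_dvd_of_dvd_wronskian hF hF' (ih (by omega)) ?_
      ((pow_dvd_pow X (by omega)).trans hW)
    -- `0 < i + 1 - m < p`, so `i + 1 - m` does not vanish in characteristic `p`
    intro h
    have h0 : ((i + 1 - m : ℕ) : R) = 0 := by
      rw [Nat.cast_sub (by omega), h]
      push_cast
      ring
    have := Nat.le_of_dvd (by omega) ((CharP.cast_eq_zero_iff R p _).mp h0)
    omega

end Polynomial

namespace Derivation

variable {R A : Type*} [CommRing R] [CommRing A] [Algebra R A]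

theorem apply_mem_span_pow_succ (D : Derivation R A A) {x : A}
    (hD : ∀ a, D a ∈ Ideal.span {x}) (hx : D x ∈ Ideal.span {x ^ 2}) (n : ℕ) :
    ∀ a ∈ Ideal.span {x ^ n}, D a ∈ Ideal.span {x ^ (n + 1)} := by
  induction n with
  | zero => exact fun a _ => by simpa using hD a
  | succ n ih =>
    intro a ha
    obtain ⟨c, rfl⟩ := Ideal.mem_span_singleton'.mp ha
    have hb : c * x ^ n ∈ Ideal.span {x ^ n} :=
      Ideal.mul_mem_left _ _ (Ideal.mem_span_singleton_self _)
    have hDx : c * x ^ n * D x ∈ Ideal.span {x ^ (n + 2)} := by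
      rw [Ideal.mem_span_singleton, pow_add]
      exact mul_dvd_mul (dvd_mul_left _ _) (Ideal.mem_span_singleton.mp hx)
    have hDb : D (c * x ^ n) * x ∈ Ideal.span {x ^ (n + 2)} := by
      rw [Ideal.mem_span_singleton, pow_succ]
      exact mul_dvd_mul_right (Ideal.mem_span_singleton.mp (ih _ hb)) x
    rw [pow_succ x n, ← mul_assoc, leibniz, smul_eq_mul, smul_eq_mul, mul_comm x]
    exact Ideal.add_mem _ hDx hDb

theorem toLinearMap_pow_apply_mem_span_pow (D : Derivation R A A) {x : A}
    (hD : ∀ a, D a ∈ Ideal.span {x}) (hx : D x ∈ Ideal.span {x ^ 2}) (n : ℕ) (a : A) :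
    (D.toLinearMap ^ n) a ∈ Ideal.span {x ^ n} := by
  induction n with
  | zero => simp
  | succ n ih =>
    rw [Module.End.pow_apply, Function.iterate_succ_apply', ← Module.End.pow_apply]
    exact D.apply_mem_span_pow_succ hD hx n _ ih

theorem toLinearMap_pow_eq_zero_of_pow_eq_zero (D : Derivation R A A) {x : A}
    (hD : ∀ a, D a ∈ Ideal.span {x}) (hx : D x ∈ Ideal.span {x ^ 2}) {n : ℕ} (hn : x ^ n = 0) :
    D.toLinearMap ^ n = 0 := by
  ext a
  simpa [hn] using D.toLinearMap_pow_apply_mem_span_pow hD hx n a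

end Derivation

namespace WittA

variable {k : Type*} [Field k] {p : ℕ}

theorem aeval_wittX : aeval (WittX k p) = Ideal.Quotient.mkₐ k (Ideal.span {X ^ p}) :=
  algHom_ext (by rw [aeval_X, Ideal.Quotient.mkₐ_eq_mk])

theorem aeval_wittX_surjective : Function.Surjective (aeval (R := k) (WittX k p)) := by
  rw [aeval_wittX]
  exact Ideal.Quotient.mkₐ_surjective k _

theorem aeval_wittX_eq_zero_iff (Q : k[X]) : aeval (WittX k p) Q = 0 ↔ X ^ p ∣ Q := by
  rw [aeval_wittX, Ideal.Quotient.mkₐ_eq_mk, Ideal.Quotient.eq_zero_iff_mem,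
    Ideal.mem_span_singleton]

theorem wittX_pow_self : WittX k p ^ p = 0 := by
  simpa using (aeval_wittX_eq_zero_iff (k := k) (p := p) (X ^ p)).mpr dvd_rfl

theorem aeval_wittX_mem_span_pow_iff {j : ℕ} (hj : j ≤ p) (Q : k[X]) :
    aeval (WittX k p) Q ∈ Ideal.span {WittX k p ^ j} ↔ X ^ j ∣ Q := by
  have hX : WittX k p ^ j = aeval (WittX k p) (X ^ j : k[X]) := (aeval_X_pow _).symm
  rw [Ideal.mem_span_singleton, hX]
  constructor
  · rintro ⟨a, ha⟩
    obtain ⟨H, rfl⟩ := aeval_wittX_surjective a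
    rw [← map_mul, ← sub_eq_zero, ← map_sub, aeval_wittX_eq_zero_iff] at ha
    exact (dvd_sub_left (dvd_mul_right _ _)).mp ((pow_dvd_pow X hj).trans ha)
  · exact map_dvd _

theorem derivation_ext {D₁ D₂ : Derivation k (WittA k p) (WittA k p)}
    (h : D₁ (WittX k p) = D₂ (WittX k p)) : D₁ = D₂ :=
  Derivation.ext fun a => by
    obtain ⟨Q, rfl⟩ := aeval_wittX_surjective a
    rw [Derivation.map_aeval, Derivation.map_aeval, h]

theorem derivation_apply_mem_span (D : Derivation k (WittA k p) (WittA k p)) (a : WittA k p) :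
    D a ∈ Ideal.span {D (WittX k p)} := by
  obtain ⟨Q, rfl⟩ := aeval_wittX_surjective a
  rw [Derivation.map_aeval, smul_eq_mul]
  exact Ideal.mul_mem_left _ _ (Ideal.mem_span_singleton_self _)

theorem toLinearMap_pow_eq_zero_of_mem_span {D : Derivation k (WittA k p) (WittA k p)} {j : ℕ} (hj : 2 ≤ j)
    (h : D (WittX k p) ∈ Ideal.span {WittX k p ^ j}) : D.toLinearMap ^ p = 0 := by
  have hX2 : D (WittX k p) ∈ Ideal.span {WittX k p ^ 2} :=
    Ideal.span_singleton_le_span_singleton.mpr (pow_dvd_pow _ hj) h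
  have hX : Ideal.span {D (WittX k p)} ≤ Ideal.span {WittX k p} :=
    Ideal.span_singleton_le_span_singleton.mpr
      ((dvd_pow_self _ two_ne_zero).trans (Ideal.mem_span_singleton.mp hX2))
  exact D.toLinearMap_pow_eq_zero_of_pow_eq_zero (fun a => hX (derivation_apply_mem_span D a)) hX2 wittX_pow_self

theorem lie_apply_wittX (x y : Derivation k (WittA k p) (WittA k p)) {F G : k[X]}
    (hF : aeval (WittX k p) F = x (WittX k p)) (hG : aeval (WittX k p) G = y (WittX k p)) :
    ⁅x, y⁆ (WittX k p) = aeval (WittX k p) (wronskian F G) := by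
  rw [Derivation.commutator_apply, ← hF, ← hG, Derivation.map_aeval, Derivation.map_aeval, ← hF, ← hG,
    wronskian, map_sub, map_mul, map_mul, smul_eq_mul, smul_eq_mul]
  ring

theorem lie_eq_zero_iff_dvd_wronskian (x y : Derivation k (WittA k p) (WittA k p)) {F G : k[X]}
    (hF : aeval (WittX k p) F = x (WittX k p)) (hG : aeval (WittX k p) G = y (WittX k p)) :
    ⁅x, y⁆ = 0 ↔ X ^ p ∣ wronskian F G := by
  rw [← aeval_wittX_eq_zero_iff, ← lie_apply_wittX x y hF hG]
  exact ⟨fun h => by rw [h]; rfl, fun h => derivation_ext (by rw [h]; rfl)⟩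

theorem lie_eq_zero_iff [CharP k p] {i : ℕ} (hi1 : p ≤ 2 * i + 1) (hi2 : i + 2 ≤ p)
    {x : Derivation k (WittA k p) (WittA k p)} (hx : x (WittX k p) ∈ Ideal.span {WittX k p ^ (i + 1)})
    (hx' : x (WittX k p) ∉ Ideal.span {WittX k p ^ (i + 2)})
    (y : Derivation k (WittA k p) (WittA k p)) :
    ⁅x, y⁆ = 0 ↔ y (WittX k p) ∈ Ideal.span {WittX k p ^ (p - i)} := by
  obtain ⟨F, hF⟩ := aeval_wittX_surjective (x (WittX k p))
  obtain ⟨G, hG⟩ := aeval_wittX_surjective (y (WittX k p))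
  rw [← hF, aeval_wittX_mem_span_pow_iff (by omega)] at hx hx'
  rw [lie_eq_zero_iff_dvd_wronskian x y hF hG, ← hG, aeval_wittX_mem_span_pow_iff (by omega)]
  refine ⟨X_pow_dvd_of_dvd_wronskian hi1 hi2 hx hx', fun hG => ?_⟩
  have hG' : X ^ (p - i - 1 + 1) ∣ G := by rwa [Nat.sub_add_cancel (by omega)]
  simpa [show i + (p - i - 1) + 1 = p by omega] using X_pow_add_dvd_wronskian hx hG'

end WittA

theorem witt_C_large_general (p : ℕ) (hp : p.Prime)
    (k : Type*) [Field k] [CharP k p]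
    (i : ℕ) (hi1 : p - 1 ≤ 2 * i) (hi2 : i ≤ p - 2) :
    ({q : Derivation k (WittA k p) (WittA k p) × Derivation k (WittA k p) (WittA k p) |
        (q.1.toLinearMap ^ p = 0 ∧ q.2.toLinearMap ^ p = 0) ∧
        (q.1 (WittX k p) ∈ Ideal.span {WittX k p ^ (i + 1)} ∧
          q.1 (WittX k p) ∉ Ideal.span {WittX k p ^ (i + 2)}) ∧ ⁅q.1, q.2⁆ = 0} =
      {x : Derivation k (WittA k p) (WittA k p) |
          x (WittX k p) ∈ Ideal.span {WittX k p ^ (i + 1)} ∧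
            x (WittX k p) ∉ Ideal.span {WittX k p ^ (i + 2)}} ×ˢ
        {y : Derivation k (WittA k p) (WittA k p) |
          y (WittX k p) ∈ Ideal.span {WittX k p ^ (p - i)}}) ∧
    (∀ x y : Derivation k (WittA k p) (WittA k p),
      x (WittX k p) ∈ Ideal.span {WittX k p ^ (i + 1)} →
      x (WittX k p) ∉ Ideal.span {WittX k p ^ (i + 2)} →
      y.toLinearMap ^ p = 0 →
        (⁅x, y⁆ = 0 ↔ y (WittX k p) ∈ Ideal.span {WittX k p ^ (p - i)})) ∧
    (∀ y : Derivation k (WittA k p) (WittA k p),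
      y (WittX k p) ∈ Ideal.span {WittX k p ^ (p - i)} → y.toLinearMap ^ p = 0) := by
  have hp2 := hp.two_le
  have lie_eq_zero_iff : ∀ x y : Derivation k (WittA k p) (WittA k p),
      x (WittX k p) ∈ Ideal.span {WittX k p ^ (i + 1)} →
      x (WittX k p) ∉ Ideal.span {WittX k p ^ (i + 2)} →
        (⁅x, y⁆ = 0 ↔ y (WittX k p) ∈ Ideal.span {WittX k p ^ (p - i)}) :=
    fun _ y hx hx' => WittA.lie_eq_zero_iff (by omega) (by omega) hx hx' y
  have nilpotent_of_mem : ∀ y : Derivation k (WittA k p) (WittA k p),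
      y (WittX k p) ∈ Ideal.span {WittX k p ^ (p - i)} → y.toLinearMap ^ p = 0 :=
    fun _ => WittA.toLinearMap_pow_eq_zero_of_mem_span (by omega)
  refine ⟨?_, fun x y hx hx' _ => lie_eq_zero_iff x y hx hx', nilpotent_of_mem⟩
  ext ⟨x, y⟩
  simp only [Set.mem_ofPred_eq, Set.mem_prod]
  constructor
  · rintro ⟨-, ⟨hx, hx'⟩, hxy⟩
    exact ⟨⟨hx, hx'⟩, (lie_eq_zero_iff x y hx hx').mp hxy⟩
  · rintro ⟨⟨hx, hx'⟩, hy⟩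
    exact ⟨⟨WittA.toLinearMap_pow_eq_zero_of_mem_span (by omega) hx, nilpotent_of_mem y hy⟩, ⟨hx, hx'⟩,
      (lie_eq_zero_iff x y hx hx').mpr hy⟩

/-- For `(p-1)/2 ≤ i ≤ p-2`, the set `C(i) = {(x,y) ∈ N × N : x ∈ g_i \ g_{i+1}, [x,y] = 0}`
equals `(g_i \ g_{i+1}) × g_{p-1-i}`; that is, for `x ∈ g_i \ g_{i+1}` and `y ∈ N` one has
`[x,y] = 0` iff `y ∈ g_{p-1-i}`, and every element of `g_{p-1-i}` lies in `N`.
Here `g_j = {d : d(X) ∈ X^{j+1}·A}` (so `g_{p-1-i} = {d : d(X) ∈ X^{p-i}·A}`) and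
`N = {x : x^p = 0}`. -/
theorem witt_C_large (p : ℕ) (hp : p.Prime) (hp3 : 3 < p)
    (k : Type*) [Field k] [IsAlgClosed k] [CharP k p]
    (i : ℕ) (hi1 : p - 1 ≤ 2 * i) (hi2 : i ≤ p - 2) :
    ({q : Derivation k (WittA k p) (WittA k p) × Derivation k (WittA k p) (WittA k p) |
        (q.1.toLinearMap ^ p = 0 ∧ q.2.toLinearMap ^ p = 0) ∧
        (q.1 (WittX k p) ∈ Ideal.span {WittX k p ^ (i + 1)} ∧
          q.1 (WittX k p) ∉ Ideal.span {WittX k p ^ (i + 2)}) ∧ ⁅q.1, q.2⁆ = 0} =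
      {x : Derivation k (WittA k p) (WittA k p) |
          x (WittX k p) ∈ Ideal.span {WittX k p ^ (i + 1)} ∧
            x (WittX k p) ∉ Ideal.span {WittX k p ^ (i + 2)}} ×ˢ
        {y : Derivation k (WittA k p) (WittA k p) |
          y (WittX k p) ∈ Ideal.span {WittX k p ^ (p - i)}}) ∧
    (∀ x y : Derivation k (WittA k p) (WittA k p),
      x (WittX k p) ∈ Ideal.span {WittX k p ^ (i + 1)} →
      x (WittX k p) ∉ Ideal.span {WittX k p ^ (i + 2)} →
      y.toLinearMap ^ p = 0 →
        (⁅x, y⁆ = 0 ↔ y (WittX k p) ∈ Ideal.span {WittX k p ^ (p - i)})) ∧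
    (∀ y : Derivation k (WittA k p) (WittA k p),
      y (WittX k p) ∈ Ideal.span {WittX k p ^ (p - i)} → y.toLinearMap ^ p = 0) :=
  witt_C_large_general p hp k i hi1 hi2
end

section
/- If k has characteristic 3, then the Witt algebra W_1 = Der_k(k[X]/(X^3)) is isomorphic as a Lie algebra over k to sl_2(k), the special linear Lie algebra of traceless 2×2 matrices over k. -/
open Polynomial

set_option synthInstance.maxHeartbeats 1000000
set_option maxHeartbeats 1000000

/-!
When `3 = 0` in `R`, `d/dX` descends to `A = R[X]/(X³)` because `(X³)' = 3X² = 0`, and a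
derivation `D` of `A` equals `D(x) • d/dx`. So `W₁ = Der_R A` is free on `∂, x∂, x²∂`, with
`⁅∂, x∂⁆ = ∂`, `⁅∂, x²∂⁆ = 2x∂`, `⁅x∂, x²∂⁆ = x²∂`. In `sl₂` the elements `-F, -H, E` satisfy the
same relations modulo `3` (e.g. `⁅-F, -H⁆ = 2F = -F`), so the linear map sending the first basis to
the second is a Lie algebra isomorphism.
-/

section

variable {R ι L L' : Type*} [CommRing R] [LieRing L] [LieAlgebra R L] [LieRing L']
  [LieAlgebra R L'] [LinearOrder ι]

theorem LinearMap.map_lie_of_basis (f : L →ₗ[R] L') (b : Module.Basis ι R L)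
    (h : ∀ i j, i < j → f ⁅b i, b j⁆ = ⁅f (b i), f (b j)⁆) (x y : L) :
    f ⁅x, y⁆ = ⁅f x, f y⁆ := by
  have hb : ∀ i j, f ⁅b i, b j⁆ = ⁅f (b i), f (b j)⁆ := by
    intro i j
    rcases lt_trichotomy i j with hij | rfl | hji
    · exact h i j hij
    · simp
    · rw [← lie_skew, map_neg, h j i hji, lie_skew]
  have hbilin := LinearMap.ext_basis (B := (LieModule.toEnd R L L : L →ₗ[R] Module.End R L).compr₂ f)
    (B' := (LieModule.toEnd R L' L' : L' →ₗ[R] Module.End R L').compl₁₂ f f) b b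
    (by simpa using hb)
  simpa using LinearMap.congr_fun₂ hbilin x y

def LinearEquiv.toLieEquivOfBasis (e : L ≃ₗ[R] L') (b : Module.Basis ι R L)
    (h : ∀ i j, i < j → e ⁅b i, b j⁆ = ⁅e (b i), e (b j)⁆) : L ≃ₗ⁅R⁆ L' :=
  { e with map_lie' := e.toLinearMap.map_lie_of_basis b h _ _ }

end

namespace AdjoinRoot

variable {R : Type*} [CommRing R] {f : R[X]}

theorem derivation_ext {M : Type*} [AddCommMonoid M] [Module R M] [Module (AdjoinRoot f) M]
    {D₁ D₂ : Derivation R (AdjoinRoot f) M} (h : D₁ (root f) = D₂ (root f)) : D₁ = D₂ :=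
  Derivation.ext fun _ ↦
    Derivation.eqOn_adjoin (Set.eqOn_singleton.2 h) (by simp [adjoinRoot_eq_top])

theorem mkₐ_derivative_eq_zero (hf : f ∣ derivative f) (g : R[X]) (hg : mkₐ f g = 0) :
    mkₐ f (Polynomial.derivative' g) = 0 := by
  obtain ⟨q, rfl⟩ := mk_eq_zero.1 hg
  rw [coe_mkₐ, mk_eq_zero, derivative'_apply, derivative_mul]
  exact dvd_add (dvd_mul_of_dvd_left hf q) (dvd_mul_right f _)

noncomputable def derivative' (hf : f ∣ derivative f) :
    Derivation R (AdjoinRoot f) (AdjoinRoot f) :=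
  Derivation.liftOfSurjective (f := mkₐ f) mk_surjective (mkₐ_derivative_eq_zero hf)

@[simp]
theorem derivative'_mk (hf : f ∣ derivative f) (g : R[X]) :
    derivative' hf (mk f g) = mk f (derivative g) :=
  Derivation.liftOfSurjective_apply (f := mkₐ f) mk_surjective (mkₐ_derivative_eq_zero hf) g

@[simp]
theorem derivative'_root (hf : f ∣ derivative f) : derivative' hf (root f) = 1 := by
  simpa using derivative'_mk hf X

noncomputable def derivationEquiv (hf : f ∣ derivative f) :
    AdjoinRoot f ≃ₗ[R] Derivation R (AdjoinRoot f) (AdjoinRoot f) where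
  toFun a := a • derivative' hf
  map_add' a b := add_smul a b _
  map_smul' c a := smul_assoc c a _
  invFun D := D (root f)
  left_inv a := by simp
  right_inv D := derivation_ext (by simp)

@[simp]
theorem derivationEquiv_apply (hf : f ∣ derivative f) (a : AdjoinRoot f) :
    derivationEquiv hf a = a • derivative' hf := rfl

end AdjoinRoot

theorem Derivation.lie_smul_smul {R A : Type*} [CommRing R] [CommRing A] [Algebra R A]
    (D : Derivation R A A) (a b : A) : ⁅a • D, b • D⁆ = (a * D b - b * D a) • D := by
  ext c
  simp only [commutator_apply, smul_apply, smul_eq_mul, leibniz]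
  ring

theorem Polynomial.X_pow_dvd_derivative_X_pow (R : Type*) [CommRing R] (p : ℕ) [CharP R p] :
    (X ^ p : R[X]) ∣ derivative (X ^ p) := by
  simp [derivative_X_pow]

namespace AdjoinRoot

variable {R : Type*} [CommRing R] [Nontrivial R]

noncomputable def basisXPow (n : ℕ) : Module.Basis (Fin n) R (AdjoinRoot (X ^ n : R[X])) :=
  (powerBasis' (monic_X_pow n)).basis.reindex (finCongr (natDegree_X_pow n))

@[simp]
theorem basisXPow_apply (n : ℕ) (i : Fin n) :
    basisXPow (R := R) n i = root (X ^ n) ^ (i : ℕ) := by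
  simp [basisXPow]; rfl

end AdjoinRoot

namespace LieAlgebra.SpecialLinear

variable (R : Type*) [CommRing R]

/-- Coordinates on `sl₂` in the basis `(-F, -H, E)`. -/
noncomputable def slTwoEquiv : (Fin 3 → R) ≃ₗ[R] sl (Fin 2) R where
  toFun v := ⟨!![-v 1, v 2; -v 0, v 1], LinearMap.mem_ker.2 <| by simp [Matrix.trace_fin_two]⟩
  map_add' v w := by ext i j; fin_cases i <;> fin_cases j <;> simp <;> ring
  map_smul' c v := by
    rw [RingHom.id_apply]
    ext i j; fin_cases i <;> fin_cases j <;> simp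
  invFun M := ![-M.val 1 0, -M.val 0 0, M.val 0 1]
  left_inv v := by ext i; fin_cases i <;> simp
  right_inv M := by
    have htr : M.val.trace = 0 := M.property
    rw [Matrix.trace_fin_two] at htr
    ext i j; fin_cases i <;> fin_cases j <;> simp
    linear_combination -htr

end LieAlgebra.SpecialLinear

section CharThree

open AdjoinRoot LieAlgebra.SpecialLinear

variable (R : Type*) [CommRing R] [CharP R 3]

noncomputable def wittBasis :
    Module.Basis (Fin 3) R
      (Derivation R (AdjoinRoot (X ^ 3 : R[X])) (AdjoinRoot (X ^ 3 : R[X]))) :=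
  haveI := CharP.nontrivial_of_char_ne_one (R := R) (by norm_num : 3 ≠ 1)
  (basisXPow 3).map (derivationEquiv (X_pow_dvd_derivative_X_pow R 3))

theorem wittBasis_apply (i : Fin 3) :
    wittBasis R i =
      root (X ^ 3 : R[X]) ^ (i : ℕ) • AdjoinRoot.derivative' (X_pow_dvd_derivative_X_pow R 3) := by
  have := CharP.nontrivial_of_char_ne_one (R := R) (by norm_num : 3 ≠ 1)
  simp [wittBasis]

theorem lie_wittBasis_zero_one : ⁅wittBasis R 0, wittBasis R 1⁆ = wittBasis R 0 := by
  simp only [wittBasis_apply, Derivation.lie_smul_smul]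
  congr 1
  simp

theorem lie_wittBasis_zero_two :
    ⁅wittBasis R 0, wittBasis R 2⁆ = (2 : R) • wittBasis R 1 := by
  simp only [wittBasis_apply, Derivation.lie_smul_smul, ← smul_assoc]
  congr 1
  simp [Derivation.leibniz_pow, Algebra.smul_def, map_ofNat]

theorem lie_wittBasis_one_two : ⁅wittBasis R 1, wittBasis R 2⁆ = wittBasis R 2 := by
  simp only [wittBasis_apply, Derivation.lie_smul_smul]
  congr 1
  simp [Derivation.leibniz_pow]
  ring

noncomputable def wittToSl :
    Derivation R (AdjoinRoot (X ^ 3 : R[X])) (AdjoinRoot (X ^ 3 : R[X])) ≃ₗ[R] sl (Fin 2) R :=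
  (wittBasis R).equivFun ≪≫ₗ slTwoEquiv R

theorem wittToSl_wittBasis (i : Fin 3) :
    wittToSl R (wittBasis R i) = slTwoEquiv R (Pi.single i 1) := by
  simp [wittToSl, Finsupp.single_eq_pi_single]

theorem wittToSl_lie_wittBasis (i j : Fin 3) (hij : i < j) :
    wittToSl R ⁅wittBasis R i, wittBasis R j⁆ =
      ⁅wittToSl R (wittBasis R i), wittToSl R (wittBasis R j)⁆ := by
  fin_cases i <;> fin_cases j <;> simp at hij <;>
    simp only [Fin.zero_eta, Fin.mk_one, Fin.reduceFinMk, lie_wittBasis_zero_one,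
      lie_wittBasis_zero_two, lie_wittBasis_one_two, map_smul, wittToSl_wittBasis] <;>
    ext a b <;> fin_cases a <;> fin_cases b <;> simp [slTwoEquiv, Ring.lie_def] <;> grind

noncomputable def wittEquivSl2 :
    Derivation R (AdjoinRoot (X ^ 3 : R[X])) (AdjoinRoot (X ^ 3 : R[X])) ≃ₗ⁅R⁆
      sl (Fin 2) R :=
  (wittToSl R).toLieEquivOfBasis (wittBasis R) (wittToSl_lie_wittBasis R)

end CharThree

theorem witt_char_three_iso_sl2_general (k : Type*) [Field k] [CharP k 3] :
    Nonempty (Derivation k (WittA k 3) (WittA k 3) ≃ₗ⁅k⁆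
      LieAlgebra.SpecialLinear.sl (Fin 2) k) :=
  ⟨wittEquivSl2 k⟩

/-- If `k` has characteristic `3`, then the Witt algebra `W₁ = Der_k(k[X]/(X³))` is
isomorphic as a Lie algebra over `k` to `sl₂(k)`. -/
theorem witt_char_three_iso_sl2 (k : Type*) [Field k] [IsAlgClosed k] [CharP k 3] :
    Nonempty (Derivation k (WittA k 3) (WittA k 3) ≃ₗ⁅k⁆
      LieAlgebra.SpecialLinear.sl (Fin 2) k) :=
  witt_char_three_iso_sl2_general k
end
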